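/- The following classes of structures are definable in SCL under unbounded semantics: (1) the class of connected directed graphs, i.e. graphs (V,E) such that for all vertices u and v ≠ u there is a directed path from u to v (no restriction to finite graphs); concretely the sentence ∀x∀y(x = y ∨ L(Exy ∨ ∃z(Exz ∧ ∃x(x = z ∧ C_L)))) is true in (V,E) iff (V,E) is connected; and (2) the class of well-founded linear order structures; concretely the sentence ∀x L ∀y(¬ y < x ∨ ∀x(¬ x = y ∨ C_L)) is true in a strict linear order (A,<) iff < is well-founded (has no infinite strictly descending sequence). -/

import Mathlib

/-
Common formalization of the logics SCL (static computation logic, unbounded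
game-theoretic semantics) and BndSCL (bounded semantics), following the paper
"First-order logic with self-reference".

* Games are played on arbitrary (possibly infinite) arenas; plays are maximal
  walks; strategies are functions from finite walks (histories) to positions;
  infinite plays, and finite plays ending at a dead end where `win` holds for
  neither player, are won by nobody.
* The semantic games are formalized with positions carrying the current
  (sub)formula, an environment binding each label symbol to the labelled
  formula it most recently named (this is the standard closure rendering of
  "reference formula of a claim-symbol occurrence"), the current assignment
  and the polarity (+ = true, − = false).  The bounded game additionally
  carries a clock value.
-/

set_option autoImplicit false

universe u

/-! ## Generic two-player games on (possibly infinite) arenas -/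

inductive Player : Type
  | eloise : Player
  | abelard : Player
deriving DecidableEq

def Player.opp : Player → Player
  | .eloise => .abelard
  | .abelard => .eloise

/-- A game arena: an ownership function (corresponding to the partition
`V = V₀ ∪ V₁`), an edge relation, and a predicate telling which player (if
any) wins a play ending at a given dead-end position. -/
structure GameArena (P : Type u) where
  turn : P → Player
  edge : P → P → Prop
  win : P → Player → Prop

namespace GameArena

variable {P : Type u} (A : GameArena P)

def DeadEnd (u : P) : Prop := ∀ x, ¬ A.edge u x

/-- `w` is a finite nonempty walk whose first element is `v`. -/
def IsWalkFrom (v : P) (w : List P) : Prop :=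
  w.head? = some v ∧ List.Chain' A.edge w

/-- A finite (maximal) play from `v`: a walk whose last element is a dead end. -/
def IsFinitePlay (v : P) (w : List P) : Prop :=
  A.IsWalkFrom v w ∧ ∀ u, w.getLast? = some u → A.DeadEnd u

/-- An infinite play from `v`. -/
def IsInfPlay (v : P) (f : ℕ → P) : Prop :=
  f 0 = v ∧ ∀ n, A.edge (f n) (f (n + 1))

/-- A strategy (a function from histories to positions) of player `pl` is
legal if it always prescribes a move along an edge whenever a move exists. -/
def LegalFor (pl : Player) (v : P) (σ : List P → P) : Prop :=
  ∀ w u, A.IsWalkFrom v w → w.getLast? = some u → A.turn u = pl →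
    (∃ x, A.edge u x) → A.edge u (σ w)

/-- The strategy `σ` of player `pl` is followed in the finite play `w`. -/
def FollowsFin (pl : Player) (σ : List P → P) (w : List P) : Prop :=
  ∀ q u x, (q ++ [x]) <+: w → q.getLast? = some u → A.turn u = pl → x = σ q

/-- The strategy `σ` of player `pl` is followed in the infinite play `f`. -/
def FollowsInf (pl : Player) (σ : List P → P) (f : ℕ → P) : Prop :=
  ∀ n, A.turn (f n) = pl →
    f (n + 1) = σ (List.ofFn fun i : Fin (n + 1) => f i)

/-- `σ` is a winning strategy of player `pl` from `v`: it is legal, every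
finite maximal play following it ends in a dead end won by `pl`, and no
infinite play follows it (infinite plays are won by neither player). -/
def WinningStrategy (pl : Player) (v : P) (σ : List P → P) : Prop :=
  A.LegalFor pl v σ ∧
  (∀ w, A.IsFinitePlay v w → A.FollowsFin pl σ w →
      ∃ u, w.getLast? = some u ∧ A.win u pl) ∧
  (∀ f, A.IsInfPlay v f → ¬ A.FollowsInf pl σ f)

def HasWinningStrategy (pl : Player) (v : P) : Prop :=
  ∃ σ : List P → P, A.WinningStrategy pl v σ

end GameArena

/-- A positional strategy: its moves depend only on the current position. -/
def Positional {P : Type u} (σ : List P → P) : Prop :=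
  ∀ q q' : List P, q.getLast? = q'.getLast? → σ q = σ q'

/-! ## Syntax of SCL / BndSCL -/

/-- A purely relational vocabulary. -/
structure Vocab : Type 1 where
  Rel : Type
  arity : Rel → ℕ

/-- Formulas of SCL / BndSCL over the vocabulary `V`.  Variables and label
symbols are natural numbers; `claim L` is the claim symbol `C_L` and
`lab L φ` is the labelled formula `L φ`. -/
inductive SCLFormula (V : Vocab) : Type
  | bot : SCLFormula V
  | eq (x y : ℕ) : SCLFormula V
  | rel (R : V.Rel) (args : Fin (V.arity R) → ℕ) : SCLFormula V
  | claim (L : ℕ) : SCLFormula V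
  | not (φ : SCLFormula V) : SCLFormula V
  | and (φ ψ : SCLFormula V) : SCLFormula V
  | or (φ ψ : SCLFormula V) : SCLFormula V
  | ex (x : ℕ) (φ : SCLFormula V) : SCLFormula V
  | all (x : ℕ) (φ : SCLFormula V) : SCLFormula V
  | lab (L : ℕ) (φ : SCLFormula V) : SCLFormula V

namespace SCLFormula

variable {V : Vocab}

/-- First-order atoms. -/
def IsFOAtom : SCLFormula V → Prop
  | .bot => True
  | .eq _ _ => True
  | .rel _ _ => True
  | _ => False

/-- Purely first-order formulas (no claim symbols, no label symbols). -/
def IsFO : SCLFormula V → Prop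
  | .bot => True
  | .eq _ _ => True
  | .rel _ _ => True
  | .claim _ => False
  | .not φ => IsFO φ
  | .and φ ψ => IsFO φ ∧ IsFO ψ
  | .or φ ψ => IsFO φ ∧ IsFO ψ
  | .ex _ φ => IsFO φ
  | .all _ φ => IsFO φ
  | .lab _ _ => False

/-- Free (individual) variables. -/
def freeVars : SCLFormula V → Finset ℕ
  | .bot => ∅
  | .eq x y => {x, y}
  | .rel _ a => Finset.image a Finset.univ
  | .claim _ => ∅
  | .not φ => freeVars φ
  | .and φ ψ => freeVars φ ∪ freeVars ψ
  | .or φ ψ => freeVars φ ∪ freeVars ψ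
  | .ex x φ => freeVars φ \ {x}
  | .all x φ => freeVars φ \ {x}
  | .lab _ φ => freeVars φ

/-- All variables occurring in a formula (free or bound). -/
def vars : SCLFormula V → Finset ℕ
  | .bot => ∅
  | .eq x y => {x, y}
  | .rel _ a => Finset.image a Finset.univ
  | .claim _ => ∅
  | .not φ => vars φ
  | .and φ ψ => vars φ ∪ vars ψ
  | .or φ ψ => vars φ ∪ vars ψ
  | .ex x φ => insert x (vars φ)
  | .all x φ => insert x (vars φ)
  | .lab _ φ => vars φ

/-- Sentences: formulas with no free variables. -/
def IsSentence (φ : SCLFormula V) : Prop := freeVars φ = ∅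

end SCLFormula

/-! ## Structures and first-order (Tarski) satisfaction -/

/-- A (suitable) model for vocabulary `V`: a nonempty domain together with an
interpretation of all relation symbols. -/
structure Struct (V : Vocab) where
  Dom : Type u
  dom_nonempty : Nonempty Dom
  interp : ∀ R : V.Rel, (Fin (V.arity R) → Dom) → Prop

attribute [instance] Struct.dom_nonempty

/-- Satisfaction of atoms (false on non-atoms). -/
def atomSat {V : Vocab} (M : Struct.{u} V) (s : ℕ → M.Dom) : SCLFormula V → Prop
  | .bot => False
  | .eq x y => s x = s y
  | .rel R a => M.interp R fun i => s (a i)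
  | _ => False

/-- Standard (Tarski) first-order satisfaction.  It is only meaningful on
purely first-order formulas; claim symbols are interpreted as `False` and
label symbols are ignored. -/
def FOSat {V : Vocab} (M : Struct.{u} V) : (ℕ → M.Dom) → SCLFormula V → Prop
  | _, .bot => False
  | s, .eq x y => s x = s y
  | s, .rel R a => M.interp R fun i => s (a i)
  | _, .claim _ => False
  | s, .not φ => ¬ FOSat M s φ
  | s, .and φ ψ => FOSat M s φ ∧ FOSat M s ψ
  | s, .or φ ψ => FOSat M s φ ∨ FOSat M s ψ
  | s, .ex x φ => ∃ a : M.Dom, FOSat M (Function.update s x a) φ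
  | s, .all x φ => ∀ a : M.Dom, FOSat M (Function.update s x a) φ
  | s, .lab _ φ => FOSat M s φ

/-! ## The evaluation games -/

/-- A position of the semantic game: the current formula, the environment
recording for each label symbol `L` the reference formula `L ψ` it currently
names, the current assignment, and the polarity (`true` = `+`). -/
structure SCLPos (V : Vocab) (D : Type u) : Type u where
  form : SCLFormula V
  env : ℕ → Option (SCLFormula V)
  asg : ℕ → D
  pol : Bool

/-- Which player moves at a given position. (At positions with at most one
successor the owner is irrelevant; we let Eloise own them.) -/
def posTurn {V : Vocab} {D : Type u} (p : SCLPos V D) : Player :=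
  match p.form, p.pol with
  | .and _ _, true => .abelard
  | .and _ _, false => .eloise
  | .or _ _, true => .eloise
  | .or _ _, false => .abelard
  | .all _ _, true => .abelard
  | .all _ _, false => .eloise
  | .ex _ _, true => .eloise
  | .ex _ _, false => .abelard
  | _, _ => .eloise

/-- Who wins a play ending at a given position: at an FO-atom position,
Eloise wins iff the atom's truth value agrees with the polarity, and Abelard
wins otherwise; plays ending anywhere else (e.g. at a claim symbol with no
reference formula, or with clock value 0) are won by neither player. -/
def posWin {V : Vocab} (M : Struct.{u} V) (p : SCLPos V M.Dom) : Player → Prop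
  | .eloise => p.form.IsFOAtom ∧ (atomSat M p.asg p.form ↔ p.pol = true)
  | .abelard => p.form.IsFOAtom ∧ ¬ (atomSat M p.asg p.form ↔ p.pol = true)

/-- Moves of the unbounded evaluation game `G_∞`. -/
inductive UStep {V : Vocab} (M : Struct.{u} V) :
    SCLPos V M.Dom → SCLPos V M.Dom → Prop
  | neg (φ : SCLFormula V) (e : ℕ → Option (SCLFormula V)) (s : ℕ → M.Dom) (b : Bool) :
      UStep M ⟨.not φ, e, s, b⟩ ⟨φ, e, s, !b⟩
  | andLeft (φ ψ : SCLFormula V) (e : ℕ → Option (SCLFormula V)) (s : ℕ → M.Dom) (b : Bool) :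
      UStep M ⟨.and φ ψ, e, s, b⟩ ⟨φ, e, s, b⟩
  | andRight (φ ψ : SCLFormula V) (e : ℕ → Option (SCLFormula V)) (s : ℕ → M.Dom) (b : Bool) :
      UStep M ⟨.and φ ψ, e, s, b⟩ ⟨ψ, e, s, b⟩
  | orLeft (φ ψ : SCLFormula V) (e : ℕ → Option (SCLFormula V)) (s : ℕ → M.Dom) (b : Bool) :
      UStep M ⟨.or φ ψ, e, s, b⟩ ⟨φ, e, s, b⟩
  | orRight (φ ψ : SCLFormula V) (e : ℕ → Option (SCLFormula V)) (s : ℕ → M.Dom) (b : Bool) :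
      UStep M ⟨.or φ ψ, e, s, b⟩ ⟨ψ, e, s, b⟩
  | exStep (x : ℕ) (φ : SCLFormula V) (e : ℕ → Option (SCLFormula V)) (s : ℕ → M.Dom)
      (b : Bool) (a : M.Dom) :
      UStep M ⟨.ex x φ, e, s, b⟩ ⟨φ, e, Function.update s x a, b⟩
  | allStep (x : ℕ) (φ : SCLFormula V) (e : ℕ → Option (SCLFormula V)) (s : ℕ → M.Dom)
      (b : Bool) (a : M.Dom) :
      UStep M ⟨.all x φ, e, s, b⟩ ⟨φ, e, Function.update s x a, b⟩
  | labStep (L : ℕ) (φ : SCLFormula V) (e : ℕ → Option (SCLFormula V)) (s : ℕ → M.Dom)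
      (b : Bool) :
      UStep M ⟨.lab L φ, e, s, b⟩ ⟨φ, Function.update e L (some (.lab L φ)), s, b⟩
  | claimStep (L : ℕ) (e : ℕ → Option (SCLFormula V)) (s : ℕ → M.Dom) (b : Bool)
      (χ : SCLFormula V) (h : e L = some χ) :
      UStep M ⟨.claim L, e, s, b⟩ ⟨χ, e, s, b⟩

/-- Moves of the `n`-bounded evaluation game: positions additionally carry a
clock value, which decreases by one exactly at jumps from a claim symbol to
its reference formula; a claim-symbol position with clock value `0` is a dead
end won by neither player. -/
inductive BStep {V : Vocab} (M : Struct.{u} V) :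
    SCLPos V M.Dom × ℕ → SCLPos V M.Dom × ℕ → Prop
  | neg (φ : SCLFormula V) (e : ℕ → Option (SCLFormula V)) (s : ℕ → M.Dom) (b : Bool) (n : ℕ) :
      BStep M (⟨.not φ, e, s, b⟩, n) (⟨φ, e, s, !b⟩, n)
  | andLeft (φ ψ : SCLFormula V) (e : ℕ → Option (SCLFormula V)) (s : ℕ → M.Dom) (b : Bool)
      (n : ℕ) : BStep M (⟨.and φ ψ, e, s, b⟩, n) (⟨φ, e, s, b⟩, n)
  | andRight (φ ψ : SCLFormula V) (e : ℕ → Option (SCLFormula V)) (s : ℕ → M.Dom) (b : Bool)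
      (n : ℕ) : BStep M (⟨.and φ ψ, e, s, b⟩, n) (⟨ψ, e, s, b⟩, n)
  | orLeft (φ ψ : SCLFormula V) (e : ℕ → Option (SCLFormula V)) (s : ℕ → M.Dom) (b : Bool)
      (n : ℕ) : BStep M (⟨.or φ ψ, e, s, b⟩, n) (⟨φ, e, s, b⟩, n)
  | orRight (φ ψ : SCLFormula V) (e : ℕ → Option (SCLFormula V)) (s : ℕ → M.Dom) (b : Bool)
      (n : ℕ) : BStep M (⟨.or φ ψ, e, s, b⟩, n) (⟨ψ, e, s, b⟩, n)
  | exStep (x : ℕ) (φ : SCLFormula V) (e : ℕ → Option (SCLFormula V)) (s : ℕ → M.Dom)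
      (b : Bool) (n : ℕ) (a : M.Dom) :
      BStep M (⟨.ex x φ, e, s, b⟩, n) (⟨φ, e, Function.update s x a, b⟩, n)
  | allStep (x : ℕ) (φ : SCLFormula V) (e : ℕ → Option (SCLFormula V)) (s : ℕ → M.Dom)
      (b : Bool) (n : ℕ) (a : M.Dom) :
      BStep M (⟨.all x φ, e, s, b⟩, n) (⟨φ, e, Function.update s x a, b⟩, n)
  | labStep (L : ℕ) (φ : SCLFormula V) (e : ℕ → Option (SCLFormula V)) (s : ℕ → M.Dom)
      (b : Bool) (n : ℕ) :
      BStep M (⟨.lab L φ, e, s, b⟩, n) (⟨φ, Function.update e L (some (.lab L φ)), s, b⟩, n)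
  | claimStep (L : ℕ) (e : ℕ → Option (SCLFormula V)) (s : ℕ → M.Dom) (b : Bool)
      (χ : SCLFormula V) (n : ℕ) (h : e L = some χ) :
      BStep M (⟨.claim L, e, s, b⟩, n + 1) (⟨χ, e, s, b⟩, n)

/-- The unbounded evaluation game `G_∞(𝔄, ·, ·)` as a game arena. -/
def gameU {V : Vocab} (M : Struct.{u} V) : GameArena (SCLPos V M.Dom) where
  turn := posTurn
  edge := UStep M
  win := posWin M

/-- The bounded evaluation games `G_n(𝔄, ·, ·)` (for all clock values `n`
simultaneously) as a game arena. -/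
def gameB {V : Vocab} (M : Struct.{u} V) : GameArena (SCLPos V M.Dom × ℕ) where
  turn p := posTurn p.1
  edge := BStep M
  win p := posWin M p.1

/-- The initial position of the evaluation game for `φ` under assignment `s`:
empty environment and positive polarity. -/
def initPos {V : Vocab} {D : Type u} (φ : SCLFormula V) (s : ℕ → D) : SCLPos V D :=
  ⟨φ, fun _ => none, s, true⟩

/-- Truth under the unbounded semantics (the logic SCL):
`𝔄,s ⊨ φ` iff Eloise has a winning strategy in `G_∞(𝔄,s,φ)`. -/
def SCLTrue {V : Vocab} (M : Struct.{u} V) (s : ℕ → M.Dom) (φ : SCLFormula V) : Prop :=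
  (gameU M).HasWinningStrategy .eloise (initPos φ s)

/-! ### The bounded game `G_ω` -/

/-- Positions of the game `G_ω`: the initial position (where Abelard picks a
number `n'`), the intermediate positions (where Eloise picks some `n ≥ n'`),
and the positions of the `n`-bounded games. -/
inductive GOPos (V : Vocab) (D : Type u) : Type u
  | start : GOPos V D
  | mid (n' : ℕ) : GOPos V D
  | inner (p : SCLPos V D) (clock : ℕ) : GOPos V D

inductive GOStep {V : Vocab} (M : Struct.{u} V) (φ : SCLFormula V) (s : ℕ → M.Dom) :
    GOPos V M.Dom → GOPos V M.Dom → Prop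
  | abelardPick (n' : ℕ) : GOStep M φ s .start (.mid n')
  | eloisePick (n' n : ℕ) (h : n' ≤ n) : GOStep M φ s (.mid n') (.inner (initPos φ s) n)
  | play (p q : SCLPos V M.Dom) (m k : ℕ) (h : BStep M (p, m) (q, k)) :
      GOStep M φ s (.inner p m) (.inner q k)

def goTurn {V : Vocab} {D : Type u} : GOPos V D → Player
  | .start => .abelard
  | .mid _ => .eloise
  | .inner p _ => posTurn p

def goWin {V : Vocab} (M : Struct.{u} V) : GOPos V M.Dom → Player → Prop
  | .inner p _, pl => posWin M p pl
  | _, _ => False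

/-- The bounded evaluation game `G_ω(𝔄,s,φ)`: Abelard picks `n' ∈ ℕ`, then
Eloise picks `n ≥ n'`, and then `G_n(𝔄,s,φ)` is played. -/
def gameOmega {V : Vocab} (M : Struct.{u} V) (φ : SCLFormula V) (s : ℕ → M.Dom) :
    GameArena (GOPos V M.Dom) where
  turn := goTurn
  edge := GOStep M φ s
  win := goWin M

/-- Truth under the bounded semantics (the logic BndSCL):
`𝔄,s ⊨_ω φ` iff Eloise has a winning strategy in `G_ω(𝔄,s,φ)`. -/
def BndTrue {V : Vocab} (M : Struct.{u} V) (s : ℕ → M.Dom) (φ : SCLFormula V) : Prop :=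
  (gameOmega M φ s).HasWinningStrategy .eloise .start

/-! ## Approximants -/

/-- Auxiliary structural recursion for approximants: `k` tells what to put in
place of a claim symbol.  Label symbols are deleted (while updating the
environment), and polarity is tracked through negations. -/
def approxCore {V : Vocab}
    (k : (ℕ → Option (SCLFormula V)) → Bool → ℕ → SCLFormula V) :
    (ℕ → Option (SCLFormula V)) → Bool → SCLFormula V → SCLFormula V
  | _, _, .bot => .bot
  | _, _, .eq x y => .eq x y
  | _, _, .rel R a => .rel R a
  | e, b, .claim L => k e b L
  | e, b, .not φ => .not (approxCore k e (!b) φ)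
  | e, b, .and φ ψ => .and (approxCore k e b φ) (approxCore k e b ψ)
  | e, b, .or φ ψ => .or (approxCore k e b φ) (approxCore k e b ψ)
  | e, b, .ex x φ => .ex x (approxCore k e b φ)
  | e, b, .all x φ => .all x (approxCore k e b φ)
  | e, b, .lab L φ => approxCore k (Function.update e L (some (.lab L φ))) b φ

/-- `approx n e b φ` unfolds each claim symbol of `φ` (in environment `e`,
under polarity `b`) through `n` jumps to reference formulas; claim symbols
reached with exhausted budget (or with no reference formula) are replaced by
`⊥` at positive occurrences and `⊤` (i.e. `¬⊥`) at negative occurrences, and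
all label symbols are deleted. -/
def approx {V : Vocab} : ℕ → (ℕ → Option (SCLFormula V)) → Bool → SCLFormula V → SCLFormula V
  | 0 => approxCore fun _ b _ => if b then .bot else .not .bot
  | n + 1 => approxCore fun e b L =>
      match e L with
      | some χ => approx n e b χ
      | none => if b then .bot else .not .bot

/-- The `n`-th approximant `Φⁿ_φ` of `φ`: the first-order formula obtained
from the `n`-th unfolding of `φ` by deleting all label symbols and replacing
positive claim occurrences by `⊥` and negative ones by `⊤`. -/
def approximant {V : Vocab} (φ : SCLFormula V) (n : ℕ) : SCLFormula V :=
  approx n (fun _ => none) true φ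

/-! ## Directed graphs as structures over one binary relation symbol -/

/-- The vocabulary with a single binary relation symbol. -/
abbrev binVocab : Vocab := ⟨Unit, fun _ => 2⟩

/-- The edge relation of a `binVocab`-structure. -/
def Edge (M : Struct.{u} binVocab) (a b : M.Dom) : Prop :=
  M.interp Unit.unit (fun i => if i.val = 0 then a else b)

/-- The atomic formula `E x y` (for variables `x`, `y`). -/
def Eform (x y : ℕ) : SCLFormula binVocab :=
  .rel Unit.unit (fun i => if i.val = 0 then x else y)

/-- The sentence `∀x∀y(x = y ∨ L(Exy ∨ ∃z(Exz ∧ ∃x(x = z ∧ C_L))))`,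
with `x = 0`, `y = 1`, `z = 2` and label symbol `L = 0`. -/
def phiConn : SCLFormula binVocab :=
  .all 0 (.all 1 (.or (.eq 0 1)
    (.lab 0 (.or (Eform 0 1)
      (.ex 2 (.and (Eform 0 2) (.ex 0 (.and (.eq 0 2) (.claim 0)))))))))

/-- The sentence `∀x L ∀y(¬ y < x ∨ ∀x(¬ x = y ∨ C_L))`, with `x = 0`,
`y = 1` and label symbol `L = 0` (reading the binary relation symbol as `<`). -/
def phiWF : SCLFormula binVocab :=
  .all 0 (.lab 0 (.all 1 (.or (.not (Eform 1 0))
    (.all 0 (.or (.not (.eq 0 1)) (.claim 0))))))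

/-- `M` is connected as a directed graph: for all vertices `u` and `v ≠ u`
there is a directed path from `u` to `v`. -/
def DirConnected (M : Struct.{u} binVocab) : Prop :=
  ∀ u v : M.Dom, u ≠ v →
    ∃ (n : ℕ) (f : ℕ → M.Dom), f 0 = u ∧ f n = v ∧
      ∀ i, i < n → Edge M (f i) (f (i + 1))

/-- The binary relation of `M` is a strict linear order. -/
def IsStrictLinOrder (M : Struct.{u} binVocab) : Prop :=
  (∀ a : M.Dom, ¬ Edge M a a) ∧
  (∀ a b c : M.Dom, Edge M a b → Edge M b c → Edge M a c) ∧
  (∀ a b : M.Dom, a = b ∨ Edge M a b ∨ Edge M b a)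

/-- The order has no infinite strictly descending sequence, i.e. it is
well-founded. -/
def NoDescendingSeq (M : Struct.{u} binVocab) : Prop :=
  ¬ ∃ f : ℕ → M.Dom, ∀ n : ℕ, Edge M (f (n + 1)) (f n)

/-!
Eloise wins from a position if it is a dead end she wins, if it is her turn and some move leads
to a position she wins from, or if it is Abelard's turn and all his moves do; her winning
strategies for the two sentences are assembled this way, by induction along a path from `x` to
`y` for `phiConn` and by well-founded induction on `x` for `phiWF`.

Conversely, Eloise wins from no position of a trap: a set of positions that contains no dead end
won by her, that her moves cannot leave and in which Abelard can always stay. Her winning strategy,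
played against Abelard's moves inside the trap, would give an infinite play, and she wins no
infinite play. When a sentence is false, Abelard has a trap that leads the play from the claim
symbol back to its labelled formula forever.
-/

lemma List.ofFn_succ_eq_append {α : Type*} (f : ℕ → α) (n : ℕ) :
    (List.ofFn fun i : Fin (n + 1) => f i) = (List.ofFn fun i : Fin n => f i) ++ [f n] := by
  rw [List.ofFn_succ_last]
  simp

lemma exists_seq_of_forall_exists_append_singleton {α : Type*} {Inv : List α → Prop} {v : α}
    (h0 : Inv [v]) (hext : ∀ w, Inv w → ∃ x, Inv (w ++ [x])) :
    ∃ f : ℕ → α, f 0 = v ∧ ∀ n, Inv (List.ofFn fun i : Fin (n + 1) => f i) := by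
  have : Nonempty α := ⟨v⟩
  choose! next hnext using hext
  let play : ℕ → List α := fun n => (fun w => w ++ [next w])^[n] [v]
  have hsucc : ∀ n, play (n + 1) = play n ++ [next (play n)] :=
    fun n => Function.iterate_succ_apply' _ _ _
  have hinv : ∀ n, Inv (play n) := by
    intro n
    induction n with
    | zero => exact h0
    | succ n ih => rw [hsucc]; exact hnext _ ih
  let f : ℕ → α := fun n => (play n).getLastD v
  have hplay : ∀ n, play n = List.ofFn fun i : Fin (n + 1) => f i := by
    intro n
    induction n with
    | zero => rfl
    | succ n ih => rw [List.ofFn_succ_eq_append, ← ih, hsucc]; simp [f, hsucc]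
  exact ⟨f, rfl, fun n => hplay n ▸ hinv n⟩

namespace GameArena

variable {P : Type u} (A : GameArena P)

section Walks

variable {A}

lemma isWalkFrom_cons_cons {v v' q : P} {r : List P} :
    A.IsWalkFrom v (v' :: q :: r) ↔ v' = v ∧ A.edge v' q ∧ A.IsWalkFrom q (q :: r) := by
  simp only [IsWalkFrom, List.head?_cons, Option.some.injEq, true_and]
  exact and_congr_right fun _ => List.isChain_cons_cons

lemma IsWalkFrom.append_singleton {v u x : P} {w : List P} (hw : A.IsWalkFrom v w)
    (hu : w.getLast? = some u) (hx : A.edge u x) : A.IsWalkFrom v (w ++ [x]) := by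
  obtain ⟨hhead, hchain⟩ := hw
  have hne : w ≠ [] := by rintro rfl; simp at hhead
  exact ⟨by rwa [List.head?_append_of_ne_nil _ hne],
    hchain.append (List.isChain_singleton x) (by simp [hu, hx])⟩

lemma FollowsFin.append_singleton {pl : Player} {σ : List P → P} {w : List P} {x : P}
    (hw : A.FollowsFin pl σ w) (hx : ∀ u, w.getLast? = some u → A.turn u = pl → x = σ w) :
    A.FollowsFin pl σ (w ++ [x]) := by
  intro q u y hq hu ht
  rcases List.prefix_concat_iff.1 hq with h | h
  · obtain ⟨rfl, ⟨⟩⟩ := List.append_inj' h rfl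
    exact hx u hu ht
  · exact hw q u y h hu ht

lemma FollowsFin.of_cons_cons {pl : Player} {σ τ : List P → P} {v q : P} {r : List P}
    (h : A.FollowsFin pl σ (v :: q :: r)) (hστ : ∀ r', σ (v :: q :: r') = τ (q :: r')) :
    A.FollowsFin pl τ (q :: r) := by
  intro q' u x hpre hu ht
  obtain ⟨q'', rfl⟩ : ∃ q'', q' = q :: q'' := by
    cases q' with
    | nil => simp at hu
    | cons a t => exact ⟨t, by rw [(List.cons_prefix_cons.1 hpre).1]⟩
  rw [← hστ]
  exact h (v :: q :: q'') u x (List.cons_prefix_cons.2 ⟨rfl, hpre⟩)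
    (by rwa [List.getLast?_cons_cons]) ht

end Walks

noncomputable def someMove (v : P) (w : List P) : P :=
  haveI : Nonempty P := ⟨v⟩
  Classical.epsilon fun x => ∀ u ∈ w.getLast?, A.edge u x

lemma legalFor_someMove (pl : Player) (v : P) : A.LegalFor pl v (A.someMove v) := by
  rintro w u - hu - ⟨x, hx⟩
  have : ∀ u' ∈ w.getLast?, A.edge u' (A.someMove v w) :=
    Classical.epsilon_spec (p := fun x => ∀ u ∈ w.getLast?, A.edge u x) ⟨x, by simp [hu, hx]⟩
  exact this u (by simp [hu])

theorem hasWinningStrategy_of_deadEnd {v : P} (hv : A.DeadEnd v) (hwin : A.win v .eloise) :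
    A.HasWinningStrategy .eloise v := by
  refine ⟨A.someMove v, A.legalFor_someMove _ _, ?_, fun f ⟨hf0, hf⟩ _ => hv _ (hf0 ▸ hf 0)⟩
  rintro (_ | ⟨v', _ | ⟨q, r⟩⟩) hplay -
  · simp [IsFinitePlay, IsWalkFrom] at hplay
  · obtain rfl : v' = v := by simpa [IsWalkFrom] using hplay.1.1
    exact ⟨v', rfl, hwin⟩
  · obtain ⟨rfl, hvq, -⟩ := isWalkFrom_cons_cons.1 hplay.1
    exact (hv q hvq).elim

def afterFirstMove (q₀ : P) (τ : P → List P → P) : List P → P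
  | _ :: q :: r => τ q (q :: r)
  | _ => q₀

theorem winningStrategy_afterFirstMove {v q₀ : P} {τ : P → List P → P}
    (hv : ¬ A.DeadEnd v) (hq₀ : A.turn v = .eloise → A.edge v q₀)
    (hlegal : ∀ q, A.LegalFor .eloise q (τ q))
    (hτ : ∀ q, A.edge v q → (A.turn v = .eloise → q = q₀) →
      A.WinningStrategy .eloise q (τ q)) :
    A.WinningStrategy .eloise v (afterFirstMove q₀ τ) := by
  refine ⟨?_, ?_, ?_⟩
  · rintro (_ | ⟨v', _ | ⟨q, r⟩⟩) u hw hu ht hmove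
    · simp [IsWalkFrom] at hw
    · obtain rfl : v' = v := by simpa [IsWalkFrom] using hw.1
      obtain rfl : v' = u := by simpa using hu
      exact hq₀ ht
    · exact hlegal q (q :: r) u (isWalkFrom_cons_cons.1 hw).2.2
        (by rwa [List.getLast?_cons_cons] at hu) ht hmove
  · rintro (_ | ⟨v', _ | ⟨q, r⟩⟩) hplay hfol
    · simp [IsFinitePlay, IsWalkFrom] at hplay
    · obtain rfl : v' = v := by simpa [IsWalkFrom] using hplay.1.1
      exact (hv (hplay.2 v' rfl)).elim
    · obtain ⟨rfl, hvq, hw⟩ := isWalkFrom_cons_cons.1 hplay.1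
      have hq : A.turn v' = .eloise → q = q₀ :=
        hfol [v'] v' q (List.prefix_append _ r) rfl
      obtain ⟨u, hu, hwin⟩ := (hτ q hvq hq).2.1 (q :: r)
        ⟨hw, fun u hu => hplay.2 u (by rwa [List.getLast?_cons_cons])⟩
        (hfol.of_cons_cons fun _ => rfl)
      exact ⟨u, by rwa [List.getLast?_cons_cons], hwin⟩
  · rintro f ⟨rfl, hf⟩ hfol
    have hq : A.turn (f 0) = .eloise → f 1 = q₀ := hfol 0
    refine (hτ (f 1) (hf 0) hq).2.2 (fun n => f (n + 1)) ⟨rfl, fun n => hf (n + 1)⟩ ?_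
    intro n ht
    show f (n + 1 + 1) = τ (f 1) (List.ofFn fun i : Fin (n + 1) => f (i + 1))
    rw [hfol (n + 1) ht]
    simp only [List.ofFn_succ]
    rfl

theorem hasWinningStrategy_of_moves {v q₀ : P} (hv : ¬ A.DeadEnd v)
    (hq₀ : A.turn v = .eloise → A.edge v q₀)
    (hwin : ∀ q, A.edge v q → (A.turn v = .eloise → q = q₀) → A.HasWinningStrategy .eloise q) :
    A.HasWinningStrategy .eloise v := by
  classical
  let τ : P → List P → P := fun q =>
    if h : A.HasWinningStrategy .eloise q then h.choose else A.someMove q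
  have hτ : ∀ q, A.HasWinningStrategy .eloise q → A.WinningStrategy .eloise q (τ q) :=
    fun q h => by simpa only [τ, dif_pos h] using h.choose_spec
  have hlegal : ∀ q, A.LegalFor .eloise q (τ q) := fun q => by
    by_cases h : A.HasWinningStrategy .eloise q
    · exact (hτ q h).1
    · simpa only [τ, dif_neg h] using A.legalFor_someMove .eloise q
  exact ⟨_, A.winningStrategy_afterFirstMove hv hq₀ hlegal
    fun q hq hq' => hτ q (hwin q hq hq')⟩

theorem hasWinningStrategy_of_eloise_move {v q : P} (ht : A.turn v = .eloise)
    (hq : A.edge v q) (hw : A.HasWinningStrategy .eloise q) :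
    A.HasWinningStrategy .eloise v :=
  A.hasWinningStrategy_of_moves (fun hd => hd q hq) (fun _ => hq) fun _ _ h => h ht ▸ hw

theorem hasWinningStrategy_of_abelard_moves {v : P} (ht : A.turn v = .abelard)
    (hv : ¬ A.DeadEnd v) (hw : ∀ q, A.edge v q → A.HasWinningStrategy .eloise q) :
    A.HasWinningStrategy .eloise v :=
  A.hasWinningStrategy_of_moves (q₀ := v) hv (fun h => absurd (ht.symm.trans h) (by decide))
    fun q hq _ => hw q hq

def TrapAt (Bad : P → Prop) (p : P) : Prop :=
  (A.DeadEnd p → ¬ A.win p .eloise) ∧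
  (A.turn p = .abelard → ∃ q, A.edge p q ∧ Bad q) ∧
  (A.turn p = .eloise → ∀ q, A.edge p q → Bad q)

def IsTrap (Bad : P → Prop) : Prop :=
  ∀ p, Bad p → A.TrapAt Bad p

variable {A}

lemma trapAt_of_deadEnd {Bad : P → Prop} {p : P} (ht : A.turn p = .eloise) (hp : A.DeadEnd p)
    (hwin : ¬ A.win p .eloise) : A.TrapAt Bad p :=
  ⟨fun _ => hwin, fun h => absurd (ht.symm.trans h) (by decide), fun _ q hq => (hp q hq).elim⟩

lemma trapAt_of_eloise {Bad : P → Prop} {p : P} (ht : A.turn p = .eloise) (hp : ¬ A.DeadEnd p)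
    (hq : ∀ q, A.edge p q → Bad q) : A.TrapAt Bad p :=
  ⟨fun hd => (hp hd).elim, fun h => absurd (ht.symm.trans h) (by decide), fun _ => hq⟩

lemma trapAt_of_abelard {Bad : P → Prop} {p q : P} (ht : A.turn p = .abelard) (hpq : A.edge p q)
    (hq : Bad q) : A.TrapAt Bad p :=
  ⟨fun hd => (hd q hpq).elim, fun _ => ⟨q, hpq, hq⟩, fun h => absurd (ht.symm.trans h) (by decide)⟩

/-- The play cannot have ended at `u`: Eloise, following a winning strategy, would have won it. -/
lemma IsTrap.exists_append_singleton {Bad : P → Prop} (hB : A.IsTrap Bad) {v : P}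
    {σ : List P → P} (hσ : A.WinningStrategy .eloise v σ) {w : List P} {u : P}
    (hw : A.IsWalkFrom v w) (hfol : A.FollowsFin .eloise σ w) (hu : w.getLast? = some u)
    (hbad : Bad u) :
    ∃ x, A.IsWalkFrom v (w ++ [x]) ∧ A.FollowsFin .eloise σ (w ++ [x]) ∧ Bad x := by
  obtain ⟨hdead, habelard, heloise⟩ := hB u hbad
  have hmove : ∃ x, A.edge u x := by
    by_contra! hd
    have hplay : A.IsFinitePlay v w := ⟨hw, fun u' hu' => by cases hu.symm.trans hu'; exact hd⟩
    obtain ⟨u', hu', hwin⟩ := hσ.2.1 w hplay hfol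
    cases hu.symm.trans hu'
    exact hdead hd hwin
  cases ht : A.turn u with
  | abelard =>
    obtain ⟨x, hux, hx⟩ := habelard ht
    exact ⟨x, hw.append_singleton hu hux,
      hfol.append_singleton fun u' hu' ht' => by
        cases hu.symm.trans hu'; exact absurd (ht.symm.trans ht') (by decide), hx⟩
  | eloise =>
    have hux := hσ.1 w u hw hu ht hmove
    exact ⟨σ w, hw.append_singleton hu hux, hfol.append_singleton fun _ _ _ => rfl,
      heloise ht _ hux⟩

lemma followsFin_singleton (pl : Player) (σ : List P → P) (v : P) : A.FollowsFin pl σ [v] := by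
  intro q u x hq hu _
  obtain rfl : q = [] := by simpa using hq.length_le
  simp at hu

theorem IsTrap.not_hasWinningStrategy {Bad : P → Prop} (hB : A.IsTrap Bad) {v : P}
    (hv : Bad v) : ¬ A.HasWinningStrategy .eloise v := by
  rintro ⟨σ, hσ⟩
  let Inv : List P → Prop := fun w =>
    A.IsWalkFrom v w ∧ A.FollowsFin .eloise σ w ∧ ∃ u, w.getLast? = some u ∧ Bad u
  have hext : ∀ w, Inv w → ∃ x, Inv (w ++ [x]) := by
    rintro w ⟨hw, hfol, u, hu, hbad⟩
    obtain ⟨x, hwx, hfolx, hx⟩ := hB.exists_append_singleton hσ hw hfol hu hbad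
    exact ⟨x, hwx, hfolx, x, List.getLast?_concat, hx⟩
  obtain ⟨f, hf0, hf⟩ := exists_seq_of_forall_exists_append_singleton
    (⟨⟨rfl, List.isChain_singleton v⟩, followsFin_singleton .eloise σ v, v, rfl, hv⟩ : Inv [v])
    hext
  have hlast : ∀ n, (List.ofFn fun i : Fin (n + 1) => f i).getLast? = some (f n) := fun n => by
    rw [List.ofFn_succ_eq_append, List.getLast?_concat]
  refine hσ.2.2 f ⟨hf0, fun n => ?_⟩ fun n ht => ?_
  · have hchain := (hf (n + 1)).1.2
    rw [List.ofFn_succ_eq_append] at hchain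
    exact (List.isChain_append.1 hchain).2.2 _ (hlast n) _ rfl
  · exact (hf (n + 1)).2.1 _ (f n) (f (n + 1)) (by rw [List.ofFn_succ_eq_append (n := n + 1)])
      (hlast n) ht

end GameArena

section EvaluationGame

variable {V : Vocab} {M : Struct.{u} V}

abbrev EloiseWins (M : Struct.{u} V) (p : SCLPos V M.Dom) : Prop :=
  (gameU M).HasWinningStrategy .eloise p

lemma SCLFormula.IsFOAtom.deadEnd {φ : SCLFormula V} (hφ : φ.IsFOAtom)
    (e : ℕ → Option (SCLFormula V)) (s : ℕ → M.Dom) (b : Bool) :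
    (gameU M).DeadEnd ⟨φ, e, s, b⟩ := by
  intro q hq
  cases φ <;> first | exact hφ.elim | cases hq

lemma SCLFormula.IsFOAtom.posTurn {φ : SCLFormula V} (hφ : φ.IsFOAtom)
    (e : ℕ → Option (SCLFormula V)) (s : ℕ → M.Dom) (b : Bool) :
    posTurn (⟨φ, e, s, b⟩ : SCLPos V M.Dom) = .eloise := by
  cases φ <;> first | exact hφ.elim | rfl

namespace EloiseWins

variable {φ ψ χ : SCLFormula V} {e : ℕ → Option (SCLFormula V)} {s : ℕ → M.Dom} {b : Bool}

lemma atom (hφ : φ.IsFOAtom) (h : atomSat M s φ ↔ b = true) : EloiseWins M ⟨φ, e, s, b⟩ :=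
  (gameU M).hasWinningStrategy_of_deadEnd (hφ.deadEnd e s b) ⟨hφ, h⟩

lemma not (h : EloiseWins M ⟨φ, e, s, !b⟩) : EloiseWins M ⟨.not φ, e, s, b⟩ :=
  (gameU M).hasWinningStrategy_of_eloise_move rfl (UStep.neg φ e s b) h

lemma or_left (h : EloiseWins M ⟨φ, e, s, true⟩) : EloiseWins M ⟨.or φ ψ, e, s, true⟩ :=
  (gameU M).hasWinningStrategy_of_eloise_move rfl (UStep.orLeft φ ψ e s true) h

lemma or_right (h : EloiseWins M ⟨ψ, e, s, true⟩) : EloiseWins M ⟨.or φ ψ, e, s, true⟩ :=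
  (gameU M).hasWinningStrategy_of_eloise_move rfl (UStep.orRight φ ψ e s true) h

lemma ex {x : ℕ} (a : M.Dom) (h : EloiseWins M ⟨φ, e, Function.update s x a, true⟩) :
    EloiseWins M ⟨.ex x φ, e, s, true⟩ :=
  (gameU M).hasWinningStrategy_of_eloise_move rfl (UStep.exStep x φ e s true a) h

lemma lab {L : ℕ} (h : EloiseWins M ⟨φ, Function.update e L (some (.lab L φ)), s, b⟩) :
    EloiseWins M ⟨.lab L φ, e, s, b⟩ :=
  (gameU M).hasWinningStrategy_of_eloise_move rfl (UStep.labStep L φ e s b) h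

lemma claim {L : ℕ} (he : e L = some χ) (h : EloiseWins M ⟨χ, e, s, b⟩) :
    EloiseWins M ⟨.claim L, e, s, b⟩ :=
  (gameU M).hasWinningStrategy_of_eloise_move rfl (UStep.claimStep L e s b χ he) h

lemma and (hφ : EloiseWins M ⟨φ, e, s, true⟩) (hψ : EloiseWins M ⟨ψ, e, s, true⟩) :
    EloiseWins M ⟨.and φ ψ, e, s, true⟩ :=
  (gameU M).hasWinningStrategy_of_abelard_moves rfl (fun hd => hd _ (UStep.andLeft φ ψ e s true))
    fun q hq => by cases hq <;> assumption

lemma all {x : ℕ} (h : ∀ a, EloiseWins M ⟨φ, e, Function.update s x a, true⟩) :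
    EloiseWins M ⟨.all x φ, e, s, true⟩ :=
  (gameU M).hasWinningStrategy_of_abelard_moves rfl
    (fun hd => hd _ (UStep.allStep x φ e s true (s x))) fun q hq => by cases hq; exact h _

end EloiseWins

namespace GameArena.TrapAt

variable {Bad : SCLPos V M.Dom → Prop}
variable {φ ψ χ : SCLFormula V} {e : ℕ → Option (SCLFormula V)} {s : ℕ → M.Dom} {b : Bool}

lemma atom (hφ : φ.IsFOAtom) (h : ¬ (atomSat M s φ ↔ b = true)) :
    (gameU M).TrapAt Bad ⟨φ, e, s, b⟩ :=
  trapAt_of_deadEnd (hφ.posTurn e s b) (hφ.deadEnd e s b) fun hw => h hw.2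

lemma not (h : Bad ⟨φ, e, s, !b⟩) : (gameU M).TrapAt Bad ⟨.not φ, e, s, b⟩ :=
  trapAt_of_eloise rfl (fun hd => hd _ (UStep.neg φ e s b)) fun q hq => by cases hq; exact h

lemma or (hφ : Bad ⟨φ, e, s, true⟩) (hψ : Bad ⟨ψ, e, s, true⟩) :
    (gameU M).TrapAt Bad ⟨.or φ ψ, e, s, true⟩ :=
  trapAt_of_eloise rfl (fun hd => hd _ (UStep.orLeft φ ψ e s true)) fun q hq => by
    cases hq <;> assumption

lemma ex {x : ℕ} (h : ∀ a, Bad ⟨φ, e, Function.update s x a, true⟩) :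
    (gameU M).TrapAt Bad ⟨.ex x φ, e, s, true⟩ :=
  trapAt_of_eloise rfl (fun hd => hd _ (UStep.exStep x φ e s true (s x))) fun q hq => by
    cases hq; exact h _

lemma lab {L : ℕ} (h : Bad ⟨φ, Function.update e L (some (.lab L φ)), s, b⟩) :
    (gameU M).TrapAt Bad ⟨.lab L φ, e, s, b⟩ :=
  trapAt_of_eloise rfl (fun hd => hd _ (UStep.labStep L φ e s b)) fun q hq => by cases hq; exact h

lemma claim {L : ℕ} (he : e L = some χ) (h : Bad ⟨χ, e, s, b⟩) :
    (gameU M).TrapAt Bad ⟨.claim L, e, s, b⟩ :=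
  trapAt_of_eloise rfl (fun hd => hd _ (UStep.claimStep L e s b χ he)) fun q hq => by
    cases hq with
    | claimStep _ _ _ _ χ' he' => cases he.symm.trans he'; exact h

lemma and_left (hφ : Bad ⟨φ, e, s, true⟩) : (gameU M).TrapAt Bad ⟨.and φ ψ, e, s, true⟩ :=
  trapAt_of_abelard rfl (UStep.andLeft φ ψ e s true) hφ

lemma and_right (hψ : Bad ⟨ψ, e, s, true⟩) : (gameU M).TrapAt Bad ⟨.and φ ψ, e, s, true⟩ :=
  trapAt_of_abelard rfl (UStep.andRight φ ψ e s true) hψ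

lemma all {x : ℕ} (a : M.Dom) (h : Bad ⟨φ, e, Function.update s x a, true⟩) :
    (gameU M).TrapAt Bad ⟨.all x φ, e, s, true⟩ :=
  trapAt_of_abelard rfl (UStep.allStep x φ e s true a) h

end GameArena.TrapAt

end EvaluationGame

open Relation

lemma Relation.reflTransGen_iff_exists_path {α : Type*} {r : α → α → Prop} {a b : α} :
    ReflTransGen r a b ↔
      ∃ (n : ℕ) (f : ℕ → α), f 0 = a ∧ f n = b ∧ ∀ i, i < n → r (f i) (f (i + 1)) := by
  constructor
  · intro h
    induction h with
    | refl => exact ⟨0, fun _ => a, rfl, rfl, by simp⟩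
    | @tail _ d _ hcd ih =>
      obtain ⟨n, f, hf0, hfn, hf⟩ := ih
      refine ⟨n + 1, fun i => if i ≤ n then f i else d, by simpa using hf0, by simp, fun i hi => ?_⟩
      rcases Nat.lt_or_ge i n with hi' | hi'
      · simpa [hi'.le, Nat.succ_le_of_lt hi'] using hf i hi'
      · obtain rfl : i = n := by omega
        simpa [hfn] using hcd
  · rintro ⟨n, f, rfl, rfl, hf⟩
    induction n with
    | zero => exact .refl
    | succ n ih => exact (ih fun i hi => hf i (by omega)).tail (hf n (by omega))

section Graphs

variable {M : Struct.{u} binVocab}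

lemma dirConnected_iff : DirConnected M ↔ ∀ u v : M.Dom, u ≠ v → ReflTransGen (Edge M) u v := by
  simp only [DirConnected, reflTransGen_iff_exists_path]

lemma noDescendingSeq_iff_wellFounded : NoDescendingSeq M ↔ WellFounded (Edge M) := by
  rw [wellFounded_iff_isEmpty_descending_chain, NoDescendingSeq, isEmpty_subtype]
  push Not
  rfl

lemma atomSat_Eform (s : ℕ → M.Dom) (x y : ℕ) :
    atomSat M s (Eform x y) ↔ Edge M (s x) (s y) := by
  unfold atomSat Eform Edge
  congr! 2 with i
  split_ifs <;> simp [*]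

end Graphs

section Connectivity

variable {M : Struct.{u} binVocab}

/-- The labelled subformula `L(Exy ∨ ∃z(Exz ∧ ∃x(x = z ∧ C_L)))` of `phiConn`. -/
def connRef : SCLFormula binVocab :=
  .lab 0 (.or (Eform 0 1) (.ex 2 (.and (Eform 0 2) (.ex 0 (.and (.eq 0 2) (.claim 0))))))

lemma eloiseWins_connRef {a b : M.Dom} (hab : ReflTransGen (Edge M) a b) (hne : a ≠ b)
    (e : ℕ → Option (SCLFormula binVocab)) (s : ℕ → M.Dom) (ha : s 0 = a) (hb : s 1 = b) :
    EloiseWins M ⟨connRef, e, s, true⟩ := by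
  induction hab using ReflTransGen.head_induction_on generalizing e s with
  | refl => exact absurd rfl hne
  | @head a c hac hcb ih =>
    apply EloiseWins.lab
    by_cases hc : c = b
    · subst hc
      exact .or_left (.atom trivial (by simpa [atomSat_Eform, ha, hb] using hac))
    -- Eloise walks one edge `a → c` and reenters `connRef` with `x := c`.
    refine .or_right (.ex c (.and (.atom trivial ?_) (.ex c (.and (.atom trivial ?_) ?_))))
    · simpa [atomSat_Eform, ha] using hac
    · simp [atomSat]
    · exact .claim (by simp [connRef]) (ih hc _ _ (by simp) (by simp [hb]))

lemma sclTrue_phiConn (hconn : DirConnected M) (s : ℕ → M.Dom) : SCLTrue M s phiConn := by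
  refine EloiseWins.all fun u => .all fun v => ?_
  by_cases huv : u = v
  · exact .or_left (.atom trivial (by simp [atomSat, huv]))
  · exact .or_right (eloiseWins_connRef (dirConnected_iff.1 hconn u v huv) huv _ _
      (by simp) (by simp))

/-- Positions from which Abelard, having chosen `x := u₀`, `y := v₀`, keeps `x` reachable from
`u₀` and `y = v₀`; a trap when `v₀` is not reachable from `u₀`. -/
inductive ConnTrap (u₀ v₀ : M.Dom) : SCLPos binVocab M.Dom → Prop
  | start {e s} : ConnTrap u₀ v₀ ⟨phiConn, e, s, true⟩
  | pickY {e s} (h0 : s 0 = u₀) : ConnTrap u₀ v₀ ⟨.all 1 (.or (.eq 0 1) connRef), e, s, true⟩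
  | split {e s} (h0 : s 0 = u₀) (h1 : s 1 = v₀) : ConnTrap u₀ v₀ ⟨.or (.eq 0 1) connRef, e, s, true⟩
  | ref {e s} (h0 : ReflTransGen (Edge M) u₀ (s 0)) (h1 : s 1 = v₀) :
      ConnTrap u₀ v₀ ⟨connRef, e, s, true⟩
  | body {e s} (he : e 0 = some connRef) (h0 : ReflTransGen (Edge M) u₀ (s 0)) (h1 : s 1 = v₀) :
      ConnTrap u₀ v₀
        ⟨.or (Eform 0 1) (.ex 2 (.and (Eform 0 2) (.ex 0 (.and (.eq 0 2) (.claim 0))))), e, s, true⟩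
  | pickZ {e s} (he : e 0 = some connRef) (h0 : ReflTransGen (Edge M) u₀ (s 0)) (h1 : s 1 = v₀) :
      ConnTrap u₀ v₀ ⟨.ex 2 (.and (Eform 0 2) (.ex 0 (.and (.eq 0 2) (.claim 0)))), e, s, true⟩
  | edge {e s} (he : e 0 = some connRef) (h0 : ReflTransGen (Edge M) u₀ (s 0)) (h1 : s 1 = v₀) :
      ConnTrap u₀ v₀ ⟨.and (Eform 0 2) (.ex 0 (.and (.eq 0 2) (.claim 0))), e, s, true⟩
  | pickX {e s} (he : e 0 = some connRef) (h2 : ReflTransGen (Edge M) u₀ (s 2)) (h1 : s 1 = v₀) :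
      ConnTrap u₀ v₀ ⟨.ex 0 (.and (.eq 0 2) (.claim 0)), e, s, true⟩
  | same {e s} (he : e 0 = some connRef) (h2 : ReflTransGen (Edge M) u₀ (s 2)) (h1 : s 1 = v₀) :
      ConnTrap u₀ v₀ ⟨.and (.eq 0 2) (.claim 0), e, s, true⟩
  | claim {e s} (he : e 0 = some connRef) (h0 : ReflTransGen (Edge M) u₀ (s 0)) (h1 : s 1 = v₀) :
      ConnTrap u₀ v₀ ⟨.claim 0, e, s, true⟩
  | atom {φ e s b} (hφ : φ.IsFOAtom) (h : ¬ (atomSat M s φ ↔ b = true)) :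
      ConnTrap u₀ v₀ ⟨φ, e, s, b⟩

lemma isTrap_connTrap {u₀ v₀ : M.Dom} (hne : u₀ ≠ v₀) (hv : ¬ ReflTransGen (Edge M) u₀ v₀) :
    (gameU M).IsTrap (ConnTrap u₀ v₀) := by
  intro p hp
  cases hp with
  | start => exact .all u₀ (.pickY (by simp))
  | pickY h0 => exact .all v₀ (.split (by simpa using h0) (by simp))
  | split h0 h1 =>
    exact .or (.atom trivial (by simpa [atomSat, h0, h1] using hne)) (.ref (h0 ▸ .refl) h1)
  | ref h0 h1 => exact .lab (.body (by simp [connRef]) h0 h1)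
  | body he h0 h1 =>
    exact .or (.atom trivial fun h => hv (h1 ▸ h0.tail ((atomSat_Eform _ _ _).1 (h.2 rfl))))
      (.pickZ he h0 h1)
  | pickZ he h0 h1 => exact .ex fun a => .edge he (by simpa using h0) (by simpa using h1)
  | @edge e s he h0 h1 =>
    by_cases h02 : Edge M (s 0) (s 2)
    · exact .and_right (.pickX he (h0.tail h02) h1)
    · exact .and_left (.atom trivial (by simpa [atomSat_Eform] using h02))
  | pickX he h2 h1 => exact .ex fun a => .same he (by simpa using h2) (by simpa using h1)
  | @same e s he h2 h1 =>
    by_cases h02 : s 0 = s 2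
    · exact .and_right (.claim he (h02 ▸ h2) h1)
    · exact .and_left (.atom trivial (by simpa [atomSat] using h02))
  | claim he h0 h1 => exact .claim he (.ref h0 h1)
  | atom hφ h => exact .atom hφ h

lemma sclTrue_phiConn_iff : (∀ s : ℕ → M.Dom, SCLTrue M s phiConn) ↔ DirConnected M := by
  refine ⟨fun hT => dirConnected_iff.2 fun u v huv => ?_, sclTrue_phiConn⟩
  by_contra hv
  exact (isTrap_connTrap huv hv).not_hasWinningStrategy .start (hT fun _ => u)

end Connectivity

section WellFoundedness

variable {M : Struct.{u} binVocab}

/-- The labelled subformula `L∀y(¬ y < x ∨ ∀x(¬ x = y ∨ C_L))` of `phiWF`. -/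
def wfRef : SCLFormula binVocab :=
  .lab 0 (.all 1 (.or (.not (Eform 1 0)) (.all 0 (.or (.not (.eq 0 1)) (.claim 0)))))

lemma eloiseWins_wfRef (hwf : WellFounded (Edge M)) (a : M.Dom) :
    ∀ (e : ℕ → Option (SCLFormula binVocab)) (s : ℕ → M.Dom), s 0 = a →
      EloiseWins M ⟨wfRef, e, s, true⟩ := by
  induction a using hwf.induction with
  | _ a ih =>
  intro e s ha
  refine .lab (.all fun b => ?_)
  by_cases hba : Edge M b a
  · -- Against `y := b < x`, Eloise answers `x := b` and reenters `wfRef` one step lower.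
    refine .or_right (.all fun c => ?_)
    by_cases hcb : c = b
    · exact .or_right (.claim (by simp [wfRef]) (ih b hba _ _ (by simp [hcb])))
    · exact .or_left (.not (.atom trivial (by simpa [atomSat] using hcb)))
  · exact .or_left (.not (.atom trivial (by simpa [atomSat_Eform, ha] using hba)))

/-- Positions from which Abelard, following a descending sequence `g`, keeps the value of `x`
in the range of `g`. -/
inductive WFTrap (g : ℕ → M.Dom) : SCLPos binVocab M.Dom → Prop
  | start {e s} : WFTrap g ⟨phiWF, e, s, true⟩
  | ref {e s} (n : ℕ) (h0 : s 0 = g n) : WFTrap g ⟨wfRef, e, s, true⟩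
  | pickY {e s} (n : ℕ) (he : e 0 = some wfRef) (h0 : s 0 = g n) :
      WFTrap g ⟨.all 1 (.or (.not (Eform 1 0)) (.all 0 (.or (.not (.eq 0 1)) (.claim 0)))),
        e, s, true⟩
  | less {e s} (n : ℕ) (he : e 0 = some wfRef) (h0 : s 0 = g n) (h1 : s 1 = g (n + 1)) :
      WFTrap g ⟨.or (.not (Eform 1 0)) (.all 0 (.or (.not (.eq 0 1)) (.claim 0))), e, s, true⟩
  | pickX {e s} (n : ℕ) (he : e 0 = some wfRef) (h1 : s 1 = g n) :
      WFTrap g ⟨.all 0 (.or (.not (.eq 0 1)) (.claim 0)), e, s, true⟩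
  | same {e s} (n : ℕ) (he : e 0 = some wfRef) (h0 : s 0 = g n) (h1 : s 1 = g n) :
      WFTrap g ⟨.or (.not (.eq 0 1)) (.claim 0), e, s, true⟩
  | claim {e s} (n : ℕ) (he : e 0 = some wfRef) (h0 : s 0 = g n) :
      WFTrap g ⟨.claim 0, e, s, true⟩
  | not {φ e s b} (h : WFTrap g ⟨φ, e, s, !b⟩) : WFTrap g ⟨.not φ, e, s, b⟩
  | atom {φ e s b} (hφ : φ.IsFOAtom) (h : ¬ (atomSat M s φ ↔ b = true)) : WFTrap g ⟨φ, e, s, b⟩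

lemma isTrap_wfTrap {g : ℕ → M.Dom} (hg : ∀ n, Edge M (g (n + 1)) (g n)) :
    (gameU M).IsTrap (WFTrap g) := by
  intro p hp
  cases hp with
  | start => exact .all (g 0) (.ref 0 (by simp))
  | ref n h0 => exact .lab (.pickY n (by simp [wfRef]) h0)
  | pickY n he h0 => exact .all (g (n + 1)) (.less n he (by simpa using h0) (by simp))
  | less n he h0 h1 =>
    exact .or (.not (.atom trivial (by simpa [atomSat_Eform, h0, h1] using hg n)))
      (.pickX (n + 1) he h1)
  | @pickX e s n he h1 => exact .all (s 1) (.same n he (by simpa using h1) (by simpa using h1))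
  | same n he h0 h1 =>
    exact .or (.not (.atom trivial (by simp [atomSat, h0, h1]))) (.claim n he h0)
  | claim n he h0 => exact .claim he (.ref n h0)
  | not h => exact .not h
  | atom hφ h => exact .atom hφ h

lemma sclTrue_phiWF_iff : (∀ s : ℕ → M.Dom, SCLTrue M s phiWF) ↔ NoDescendingSeq M := by
  refine ⟨?_, fun hnd s => EloiseWins.all fun a => ?_⟩
  · rintro hT ⟨g, hg⟩
    exact (isTrap_wfTrap hg).not_hasWinningStrategy .start (hT fun _ => g 0)
  · exact eloiseWins_wfRef (noDescendingSeq_iff_wellFounded.1 hnd) a _ _ (by simp)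

end WellFoundedness

/-- Under unbounded semantics, `phiConn` defines the class
of connected directed graphs (with no restriction to finite graphs), and
`phiWF` defines, within the class of strict linear orders, exactly the
well-founded ones. -/
theorem connectedness_and_wellfoundedness_definable_in_SCL :
    (∀ M : Struct.{u} binVocab,
      (∀ s : ℕ → M.Dom, SCLTrue M s phiConn) ↔ DirConnected M) ∧
    (∀ M : Struct.{u} binVocab, IsStrictLinOrder M →
      ((∀ s : ℕ → M.Dom, SCLTrue M s phiWF) ↔ NoDescendingSeq M)) :=
  ⟨fun _ => sclTrue_phiConn_iff, fun _ _ => sclTrue_phiWF_iff⟩
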